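/- For any W ∈ ℝ^{m×p} and any integer k with 1 ≤ k ≤ m-1, the best folding error at k+1 clusters is at most the best structured-pruning error at retained rank k: min over partitions of {1,...,m} into k+1 nonempty clusters of ‖W - W_f‖_F² ≤ min over subsets T of size k of ∑_{i∉T} ‖w(i)‖₂². -/
import Mathlib


open Finset Matrix

/-- Squared Frobenius norm of a real matrix: sum of squares of all entries. -/
noncomputable def frobSq {m p : ℕ} (A : Matrix (Fin m) (Fin p) ℝ) : ℝ :=
  ∑ i, ∑ j, (A i j) ^ 2

/-- The cluster of index `i` under the assignment `c`. -/
def cluster {m k : ℕ} (c : Fin m → Fin k) (j : Fin k) : Finset (Fin m) :=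
  Finset.univ.filter (fun l => c l = j)

/-- The mean of the rows of `W` lying in cluster `j` of assignment `c`. -/
noncomputable def clusterMean {m k p : ℕ} (c : Fin m → Fin k)
    (W : Matrix (Fin m) (Fin p) ℝ) (j : Fin k) : Fin p → ℝ :=
  fun t => ((cluster c j).card : ℝ)⁻¹ * ∑ l ∈ cluster c j, W l t

/-- The folding of `W` along the partition given by the fibers of `c`:
each row is replaced by the mean of the rows in its cluster. -/
noncomputable def foldMat {m k p : ℕ} (c : Fin m → Fin k)
    (W : Matrix (Fin m) (Fin p) ℝ) : Matrix (Fin m) (Fin p) ℝ :=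
  fun i t => clusterMean c W (c i) t

/-- Within-cluster sum of squares of the partition given by the fibers of `c`. -/
noncomputable def wcss {m k p : ℕ} (c : Fin m → Fin k)
    (W : Matrix (Fin m) (Fin p) ℝ) : ℝ :=
  ∑ j, ∑ i ∈ cluster c j, ∑ t, (W i t - clusterMean c W j t) ^ 2

/-- Deviations from the mean have smaller sum of squares than from 0. -/
lemma mean_sq_le {m : ℕ} (S : Finset (Fin m)) (x : Fin m → ℝ) :
    ∑ i ∈ S, (x i - (S.card : ℝ)⁻¹ * ∑ l ∈ S, x l) ^ 2 ≤ ∑ i ∈ S, (x i) ^ 2 := by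
  rcases eq_or_ne S.card 0 with h | h
  · simp [Finset.card_eq_zero.mp h]
  set μ := (S.card : ℝ)⁻¹ * ∑ l ∈ S, x l with hμ
  have hc : (S.card : ℝ) ≠ 0 := Nat.cast_ne_zero.mpr h
  have hsum : ∑ l ∈ S, x l = S.card * μ := by
    rw [hμ]; field_simp
  have expand : ∑ i ∈ S, (x i - μ) ^ 2
      = (∑ i ∈ S, (x i) ^ 2) - 2 * μ * (∑ i ∈ S, x i) + S.card * μ ^ 2 := by
    have h1 : ∀ i ∈ S, (x i - μ) ^ 2 = (x i) ^ 2 - 2 * μ * x i + μ ^ 2 := by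
      intro i _; ring
    rw [Finset.sum_congr rfl h1]
    rw [Finset.sum_add_distrib, Finset.sum_sub_distrib, ← Finset.mul_sum,
      Finset.sum_const, nsmul_eq_mul]
  rw [expand, hsum]
  nlinarith [sq_nonneg μ, Nat.cast_nonneg (α := ℝ) S.card]

/-- The best folding error at k+1 clusters is at most the best
structured-pruning error at retained rank k: the minimum over partitions into k+1
nonempty clusters of ‖W - W_f‖_F² is at most the minimum over size-k retained sets T
of the sum of squared norms of the pruned rows. -/
theorem best_folding_le_best_pruning {m p : ℕ} (W : Matrix (Fin m) (Fin p) ℝ)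
    (k : ℕ) (hk1 : 1 ≤ k) (hkm : k ≤ m - 1) :
    sInf {x : ℝ | ∃ c : Fin m → Fin (k + 1),
        Function.Surjective c ∧ x = frobSq (W - foldMat c W)} ≤
    sInf {x : ℝ | ∃ T : Finset (Fin m), T.card = k ∧
        x = ∑ i ∈ Finset.univ \ T, ∑ j, (W i j) ^ 2} := by
  have hm : k + 1 ≤ m := by omega
  -- A is bounded below by 0
  have hbddA : BddBelow {x : ℝ | ∃ c : Fin m → Fin (k + 1),
      Function.Surjective c ∧ x = frobSq (W - foldMat c W)} := by
    refine ⟨0, fun x hx => ?_⟩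
    obtain ⟨c, _, hx⟩ := hx
    rw [hx]
    exact Finset.sum_nonneg fun i _ => Finset.sum_nonneg fun j _ => sq_nonneg _
  -- B nonempty
  have hBne : ({x : ℝ | ∃ T : Finset (Fin m), T.card = k ∧
      x = ∑ i ∈ Finset.univ \ T, ∑ j, (W i j) ^ 2} : Set ℝ).Nonempty := by
    obtain ⟨T, _, hT⟩ := Finset.exists_subset_card_eq
      (s := (Finset.univ : Finset (Fin m))) (n := k) (by simp; omega)
    exact ⟨_, T, hT, rfl⟩
  refine le_csInf hBne ?_
  rintro b ⟨T, hTcard, rfl⟩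
  -- build the coloring
  have e := T.equivFinOfCardEq hTcard
  set c : Fin m → Fin (k + 1) := fun i =>
    if h : i ∈ T then Fin.castSucc (e ⟨i, h⟩) else Fin.last k with hc
  have hci : ∀ i (h : i ∈ T), c i = Fin.castSucc (e ⟨i, h⟩) := fun i h => by
    simp [hc, h]
  have hco : ∀ i, i ∉ T → c i = Fin.last k := fun i h => by simp [hc, h]
  -- clusters
  have hclustT : ∀ i (h : i ∈ T), cluster c (c i) = {i} := by
    intro i h
    ext l
    simp only [cluster, Finset.mem_filter, Finset.mem_univ, true_and,
      Finset.mem_singleton]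
    constructor
    · intro hl
      by_cases hlT : l ∈ T
      · rw [hci l hlT, hci i h] at hl
        have := Fin.castSucc_injective _ hl
        have := e.injective this
        exact congrArg Subtype.val this
      · rw [hco l hlT, hci i h] at hl
        exact absurd hl.symm (Fin.castSucc_lt_last _).ne
    · rintro rfl; rfl
  have hclustL : cluster c (Fin.last k) = Finset.univ \ T := by
    ext l
    simp only [cluster, Finset.mem_filter, Finset.mem_univ, true_and,
      Finset.mem_sdiff]
    constructor
    · intro hl
      by_cases hlT : l ∈ T
      · rw [hci l hlT] at hl
        exact absurd hl (Fin.castSucc_lt_last _).ne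
      · exact hlT
    · intro hl; exact hco l hl

  -- surjectivity
  have hsurj : Function.Surjective c := by
    intro j
    refine Fin.lastCases ?_ ?_ j
    · have : (Finset.univ \ T).Nonempty := by
        rw [← Finset.card_pos, Finset.card_sdiff_of_subset (Finset.subset_univ _),
          Finset.card_univ, Fintype.card_fin, hTcard]
        omega
      obtain ⟨i, hi⟩ := this
      rw [Finset.mem_sdiff] at hi
      exact ⟨i, hco i hi.2⟩
    · intro j'
      refine ⟨(e.symm j').1, ?_⟩
      rw [hci _ (e.symm j').2]
      congr 1
      have : (⟨(e.symm j').1, (e.symm j').2⟩ : {x // x ∈ T}) = e.symm j' := rfl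
      rw [this, e.apply_symm_apply]
  -- value of frobSq
  have hval : frobSq (W - foldMat c W) ≤ ∑ i ∈ Finset.univ \ T, ∑ j, (W i j) ^ 2 := by
    have hzero : ∀ i ∈ T, ∑ t, ((W - foldMat c W) i t) ^ 2 = 0 := by
      intro i hi
      refine Finset.sum_eq_zero fun t _ => ?_
      simp only [Matrix.sub_apply, foldMat, clusterMean, hclustT i hi]
      simp
    have hsplit : frobSq (W - foldMat c W)
        = ∑ i ∈ Finset.univ \ T, ∑ t, ((W - foldMat c W) i t) ^ 2 := by
      unfold frobSq
      rw [← Finset.sum_sdiff (Finset.subset_univ T)]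
      rw [Finset.sum_eq_zero hzero, add_zero]
    rw [hsplit]
    have hrow : ∀ i ∈ Finset.univ \ T, ∀ t, (W - foldMat c W) i t
        = W i t - ((Finset.univ \ T).card : ℝ)⁻¹ * ∑ l ∈ Finset.univ \ T, W l t := by
      intro i hi t
      rw [Finset.mem_sdiff] at hi
      simp only [Matrix.sub_apply, foldMat, clusterMean, hco i hi.2, hclustL]
    calc ∑ i ∈ Finset.univ \ T, ∑ t, ((W - foldMat c W) i t) ^ 2
        = ∑ t, ∑ i ∈ Finset.univ \ T,
            (W i t - ((Finset.univ \ T).card : ℝ)⁻¹ * ∑ l ∈ Finset.univ \ T, W l t) ^ 2 := by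
          rw [Finset.sum_comm]
          exact Finset.sum_congr rfl fun t _ => Finset.sum_congr rfl fun i hi => by
            rw [hrow i hi t]
      _ ≤ ∑ t, ∑ i ∈ Finset.univ \ T, (W i t) ^ 2 :=
          Finset.sum_le_sum fun t _ => mean_sq_le _ _
      _ = ∑ i ∈ Finset.univ \ T, ∑ j, (W i j) ^ 2 := Finset.sum_comm
  exact le_trans (csInf_le hbddA ⟨c, hsurj, rfl⟩) hval
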